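/- arXiv:1801.02519 — 2 statements merged into one kernel-verified Lean document; each statement's English description precedes it below -/
import Mathlib

section
/- If there exist a Fano Kaleidoscopic difference family FKDF(G) in a finite additive group G, a Fano Kaleidoscopic difference family FKDF(H) in a finite additive group H, and an (H,7,1)-difference matrix, then there exists a Fano Kaleidoscopic difference family FKDF(G × H) in the direct product group G × H. -/
section KaleidoscopeDefs

variable {G V : Type*}

/-- The multiset of differences `x - y` over ordered pairs of distinct elements of `B`. -/
def diffMultiset [AddGroup G] [DecidableEq G] (B : Finset G) : Multiset G :=
  ((B ×ˢ B).filter fun p => p.1 ≠ p.2).val.map fun p => p.1 - p.2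

/-- A `(G, k, lam)`-difference family, given as a multiset of blocks. -/
def IsDiffFamily [AddGroup G] [DecidableEq G] (k lam : ℕ) (𝓕 : Multiset (Finset G)) : Prop :=
  (∀ B ∈ 𝓕, B.card = k) ∧ ∀ g : G, g ≠ 0 → (𝓕.bind diffMultiset).count g = lam

/-- The `j`-th line `{b_j, b_{j+1}, b_{j+3}}` (indices mod 7) of an ordered 7-tuple. -/
def fanoLine [DecidableEq G] (B : Fin 7 → G) (j : Fin 7) : Finset G :=
  {B j, B (j + 1), B (j + 3)}

/-- A Fano Kaleidoscopic difference family: a family of ordered 7-tuples of distinct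
elements such that for each `j` the family of `j`-th lines is a `(G,3,1)`-DF. -/
def IsFKDF [AddGroup G] [DecidableEq G] (𝓕 : Multiset (Fin 7 → G)) : Prop :=
  (∀ B ∈ 𝓕, Function.Injective B) ∧
    ∀ j : Fin 7, IsDiffFamily 3 1 (𝓕.map fun B => fanoLine B j)

/-- The `i`-th line of an ordered 9-tuple `(binf, b_0, …, b_7)`:
`{b_i, b_{i+1}, b_{i+3}}` (indices mod 8) for `0 ≤ i ≤ 7`, and
`{binf, b_{i-8}, b_{i-4}}` for `8 ≤ i ≤ 11`. -/
def hesseLine [DecidableEq G] (binf : G) (b : Fin 8 → G) (i : Fin 12) : Finset G :=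
  if h : (i : ℕ) < 8 then
    {b ⟨i, h⟩, b (⟨i, h⟩ + 1), b (⟨i, h⟩ + 3)}
  else
    {binf, b ⟨(i : ℕ) - 8, by have := i.isLt; omega⟩,
      b (⟨(i : ℕ) - 8, by have := i.isLt; omega⟩ + 4)}

/-- A Hesse Kaleidoscopic difference family: a family of ordered 9-tuples of distinct
elements such that for each `i` the family of `i`-th lines is a `(G,3,1)`-DF. -/
def IsHKDF [AddGroup G] [DecidableEq G] (𝓕 : Multiset (G × (Fin 8 → G))) : Prop :=
  (∀ B ∈ 𝓕, Function.Injective B.2 ∧ ∀ k, B.1 ≠ B.2 k) ∧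
    ∀ i : Fin 12, IsDiffFamily 3 1 (𝓕.map fun B => hesseLine B.1 B.2 i)

/-- The point set of a colored plane given by its (colored) lines. -/
def linesPts [DecidableEq V] {n : ℕ} (L : Fin n → Finset V) : Finset V :=
  Finset.univ.biUnion L

/-- `L` describes a Fano plane with points in `V`, where `L i` is the line colored `c_i`:
7 points, seven 3-element lines, and any two distinct points on exactly one line. -/
def IsColoredFano [DecidableEq V] (L : Fin 7 → Finset V) : Prop :=
  (linesPts L).card = 7 ∧ (∀ i, (L i).card = 3) ∧
    ∀ x y : V, x ∈ linesPts L → y ∈ linesPts L → x ≠ y →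
      ∃! i : Fin 7, x ∈ L i ∧ y ∈ L i

/-- A Fano Kaleidoscope on the point set `V`: a multiset of line-colored Fano planes such
that for all distinct `x y` and every color `i` exactly one plane has `x, y` on its
`c_i`-colored line. -/
def IsFanoKaleidoscope [DecidableEq V] (K : Multiset (Fin 7 → Finset V)) : Prop :=
  (∀ L ∈ K, IsColoredFano L) ∧
    ∀ x y : V, x ≠ y → ∀ i : Fin 7,
      Multiset.countP (fun L => x ∈ L i ∧ y ∈ L i) K = 1

/-- A `G`-regular Fano Kaleidoscope: a Fano Kaleidoscope with point set `G` invariant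
(with colors) under all translations. -/
def IsRegularFK (G : Type*) [AddGroup G] [DecidableEq G]
    (K : Multiset (Fin 7 → Finset G)) : Prop :=
  IsFanoKaleidoscope K ∧ ∀ g : G, K.map (fun L => fun i => (L i).image (· + g)) = K

/-- `L` describes a Hesse plane (an `AG(2,3)`) with points in `V`, where `L i` is the line
colored `c_i`. -/
def IsColoredHesse [DecidableEq V] (L : Fin 12 → Finset V) : Prop :=
  (linesPts L).card = 9 ∧ (∀ i, (L i).card = 3) ∧
    ∀ x y : V, x ∈ linesPts L → y ∈ linesPts L → x ≠ y →
      ∃! i : Fin 12, x ∈ L i ∧ y ∈ L i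

/-- A Hesse Kaleidoscope on the point set `V`. -/
def IsHesseKaleidoscope [DecidableEq V] (K : Multiset (Fin 12 → Finset V)) : Prop :=
  (∀ L ∈ K, IsColoredHesse L) ∧
    ∀ x y : V, x ≠ y → ∀ i : Fin 12,
      Multiset.countP (fun L => x ∈ L i ∧ y ∈ L i) K = 1

/-- A `G`-regular Hesse Kaleidoscope. -/
def IsRegularHK (G : Type*) [AddGroup G] [DecidableEq G]
    (K : Multiset (Fin 12 → Finset G)) : Prop :=
  IsHesseKaleidoscope K ∧ ∀ g : G, K.map (fun L => fun i => (L i).image (· + g)) = K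

/-- An `(H, k, 1)`-difference matrix: a `k × |H|` matrix with entries in `H` such that the
difference of any two distinct rows contains each element of `H` exactly once. -/
def IsDiffMatrix (H : Type*) [AddGroup H] [Fintype H] (k : ℕ)
    (M : Fin k → Fin (Fintype.card H) → H) : Prop :=
  ∀ r s : Fin k, r ≠ s → Function.Bijective fun c => M r c - M s c

/-- A 2-`(v, k, lam)` design (block multiset) on the point set `V`. -/
def Is2Design [DecidableEq V] (k lam : ℕ) (𝓑 : Multiset (Finset V)) : Prop :=
  (∀ b ∈ 𝓑, b.card = k) ∧
    ∀ x y : V, x ≠ y → Multiset.countP (fun b => x ∈ b ∧ y ∈ b) 𝓑 = lam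

/-- A pairwise balanced design with block sizes in `K` on the point set `V`. -/
def IsPBD [DecidableEq V] (K : Set ℕ) (𝓑 : Multiset (Finset V)) : Prop :=
  (∀ b ∈ 𝓑, b.card ∈ K) ∧
    ∀ x y : V, x ≠ y → Multiset.countP (fun b => x ∈ b ∧ y ∈ b) 𝓑 = 1

/-- Existence of a Fano Kaleidoscope of order `v`. -/
def ExistsFK (v : ℕ) : Prop :=
  ∃ K : Multiset (Fin 7 → Finset (Fin v)), IsFanoKaleidoscope K

end KaleidoscopeDefs


section FKDFProductHelpers

lemma diff_triple {G : Type*} [AddGroup G] [DecidableEq G] {a b c : G}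
    (hab : a ≠ b) (hac : a ≠ c) (hbc : b ≠ c) :
    diffMultiset {a, b, c} = {b-c, a-c, a-b, c-b, b-a, c-a} := by
  have hval : ({a,b,c} : Finset G).val = (a ::ₘ b ::ₘ {c}) := by
    simp [Finset.insert_val, Multiset.ndinsert_of_notMem, hab, hac, hbc]
  unfold diffMultiset
  rw [Finset.filter_val, Finset.product_val, hval]
  simp [Multiset.product, Multiset.filter_cons, Multiset.filter_singleton,
    hab, hac, hbc, hab.symm, hac.symm, hbc.symm]

lemma count_zero_diff {G : Type*} [AddGroup G] [DecidableEq G] (S : Finset G) :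
    (diffMultiset S).count 0 = 0 := by
  rw [Multiset.count_eq_zero]
  intro h
  obtain ⟨p, hp, hp0⟩ := Multiset.mem_map.1 h
  rw [Finset.mem_val, Finset.mem_filter] at hp
  exact hp.2 (sub_eq_zero.1 hp0)

lemma fano_idx : ∀ j : Fin 7, j ≠ j + 1 ∧ j ≠ j + 3 ∧ j + 1 ≠ j + 3 := by decide

lemma count_univ_map {H : Type*} [Fintype H] [DecidableEq H] {n : ℕ}
    (f : Fin n → H) (hf : Function.Bijective f) (h : H) :
    ((Finset.univ.val : Multiset (Fin n)).map f).count h = 1 := by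
  have : (Finset.univ.val : Multiset (Fin n)).map f = (Finset.univ.image f).val := by
    rw [Finset.image_val, Multiset.dedup_eq_self.2]
    exact Multiset.Nodup.map hf.1 Finset.univ.nodup
  rw [this]
  refine Multiset.count_eq_one_of_mem (Finset.univ.image f).nodup ?_
  exact Finset.mem_image.2 ⟨(hf.2 h).choose, Finset.mem_univ _, (hf.2 h).choose_spec⟩

lemma sum_pair_indicator {G H : Type*} [DecidableEq G] [DecidableEq H] [Fintype H] {n : ℕ}
    (d : G) (e : Fin n → H) (he : Function.Bijective e) (g : G) (h : H) :
    (∑ c : Fin n, if g = d ∧ h = e c then 1 else 0) = if g = d then 1 else 0 := by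
  by_cases hgd : g = d
  · simp only [hgd, true_and, if_true]
    have h1 := count_univ_map e he h
    rw [Multiset.count_map] at h1
    rw [← Finset.card_filter] at *
    exact h1
  · simp [hgd]

lemma col_sum {G H : Type*} [AddCommGroup G] [DecidableEq G] [AddCommGroup H]
    [Fintype H] [DecidableEq H]
    (M : Fin 7 → Fin (Fintype.card H) → H)
    (hM : ∀ r s : Fin 7, r ≠ s → Function.Bijective fun c => M r c - M s c)
    (B : Fin 7 → G) (hB : Function.Injective B) (j : Fin 7) (g : G) (h : H) :
    (∑ c : Fin (Fintype.card H),
      (diffMultiset (fanoLine (fun i => (B i, M i c)) j)).count (g, h))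
      = (diffMultiset (fanoLine B j)).count g := by
  obtain ⟨h1, h2, h3⟩ := fano_idx j
  have e1 : B j ≠ B (j+1) := fun e => h1 (hB e)
  have e2 : B j ≠ B (j+3) := fun e => h2 (hB e)
  have e3 : B (j+1) ≠ B (j+3) := fun e => h3 (hB e)
  have p1 : ∀ c, ((B j, M j c) : G × H) ≠ (B (j+1), M (j+1) c) := by
    intro c hc; exact e1 (congrArg Prod.fst hc)
  have p2 : ∀ c, ((B j, M j c) : G × H) ≠ (B (j+3), M (j+3) c) := by
    intro c hc; exact e2 (congrArg Prod.fst hc)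
  have p3 : ∀ c, ((B (j+1), M (j+1) c) : G × H) ≠ (B (j+3), M (j+3) c) := by
    intro c hc; exact e3 (congrArg Prod.fst hc)
  have key : ∀ c, fanoLine (fun i => (B i, M i c)) j
      = ({(B j, M j c), (B (j+1), M (j+1) c), (B (j+3), M (j+3) c)} : Finset (G × H)) :=
    fun c => rfl
  rw [Finset.sum_congr rfl (fun c _ => by
    rw [key c, diff_triple (p1 c) (p2 c) (p3 c)])]
  rw [fanoLine, diff_triple e1 e2 e3]
  simp only [Prod.mk_sub_mk, Multiset.insert_eq_cons, Multiset.count_cons,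
    Multiset.count_singleton, Prod.mk.injEq]
  rw [show ∀ a b c d e f : ℕ, a + b + c + d + e + f = a + (b + (c + (d + (e + f))))
    by intros; ring]
  simp only [Finset.sum_add_distrib]
  rw [sum_pair_indicator _ _ (hM _ _ h2.symm),
      sum_pair_indicator _ _ (hM _ _ h1.symm),
      sum_pair_indicator _ _ (hM _ _ h3.symm),
      sum_pair_indicator _ _ (hM _ _ h1),
      sum_pair_indicator _ _ (hM _ _ h2),
      sum_pair_indicator _ _ (hM _ _ h3)]
  ring

lemma zero_part {G H : Type*} [AddCommGroup G] [DecidableEq G] [AddCommGroup H]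
    [DecidableEq H]
    (B' : Fin 7 → H) (hB' : Function.Injective B') (j : Fin 7) (g : G) (h : H) :
    (diffMultiset (fanoLine (fun i => ((0 : G), B' i)) j)).count (g, h)
      = if g = 0 then (diffMultiset (fanoLine B' j)).count h else 0 := by
  obtain ⟨h1, h2, h3⟩ := fano_idx j
  have e1 : B' j ≠ B' (j+1) := fun e => h1 (hB' e)
  have e2 : B' j ≠ B' (j+3) := fun e => h2 (hB' e)
  have e3 : B' (j+1) ≠ B' (j+3) := fun e => h3 (hB' e)
  have p1 : (((0:G), B' j) : G × H) ≠ ((0:G), B' (j+1)) := by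
    intro hc; exact e1 (congrArg Prod.snd hc)
  have p2 : (((0:G), B' j) : G × H) ≠ ((0:G), B' (j+3)) := by
    intro hc; exact e2 (congrArg Prod.snd hc)
  have p3 : (((0:G), B' (j+1)) : G × H) ≠ ((0:G), B' (j+3)) := by
    intro hc; exact e3 (congrArg Prod.snd hc)
  have key : fanoLine (fun i => ((0:G), B' i)) j
      = ({((0:G), B' j), ((0:G), B' (j+1)), ((0:G), B' (j+3))} : Finset (G × H)) := rfl
  rw [key, diff_triple p1 p2 p3, fanoLine, diff_triple e1 e2 e3]
  simp only [Prod.mk_sub_mk, sub_self, Multiset.insert_eq_cons, Multiset.count_cons,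
    Multiset.count_singleton, Prod.mk.injEq]
  by_cases hg : g = 0
  · simp [hg]
  · simp [hg]

lemma card_fanoLine {V : Type*} [DecidableEq V] (T : Fin 7 → V)
    (hT : Function.Injective T) (j : Fin 7) : (fanoLine T j).card = 3 := by
  obtain ⟨h1, h2, h3⟩ := fano_idx j
  refine Finset.card_eq_three.2 ⟨T j, T (j+1), T (j+3),
    fun e => h1 (hT e), fun e => h2 (hT e), fun e => h3 (hT e), rfl⟩

end FKDFProductHelpers

/-- From an FKDF(G), an FKDF(H) and an (H,7,1)-difference matrix one can
build an FKDF(G × H). -/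
theorem FKDF_product
    (G : Type) [AddCommGroup G] [Fintype G] [DecidableEq G]
    (H : Type) [AddCommGroup H] [Fintype H] [DecidableEq H]
    (𝓕 : Multiset (Fin 7 → G)) (hF : IsFKDF 𝓕)
    (𝓕' : Multiset (Fin 7 → H)) (hF' : IsFKDF 𝓕')
    (M : Fin 7 → Fin (Fintype.card H) → H) (hM : IsDiffMatrix H 7 M) :
    ∃ 𝓓 : Multiset (Fin 7 → G × H), IsFKDF 𝓓 := by
  classical
  set A : Multiset (Fin 7 → G × H) :=
    𝓕.bind fun B => (Finset.univ.val : Multiset (Fin (Fintype.card H))).map fun c => fun i => (B i, M i c)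
      with hA
  set Bp : Multiset (Fin 7 → G × H) := 𝓕'.map fun B' => fun i => ((0 : G), B' i) with hBp
  refine ⟨A + Bp, ?_, ?_⟩
  · intro T hT
    rcases Multiset.mem_add.1 hT with hT | hT
    · obtain ⟨B, hB, hT⟩ := Multiset.mem_bind.1 hT
      obtain ⟨c, _, hT⟩ := Multiset.mem_map.1 hT
      subst hT
      intro i1 i2 hi
      exact hF.1 B hB (congrArg Prod.fst hi)
    · obtain ⟨B', hB', hT⟩ := Multiset.mem_map.1 hT
      subst hT
      intro i1 i2 hi
      exact hF'.1 B' hB' (congrArg Prod.snd hi)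
  · intro j
    constructor
    · intro S hS
      obtain ⟨T, hT, hS⟩ := Multiset.mem_map.1 hS
      subst hS
      rcases Multiset.mem_add.1 hT with hT | hT
      · obtain ⟨B, hB, hT⟩ := Multiset.mem_bind.1 hT
        obtain ⟨c, _, hT⟩ := Multiset.mem_map.1 hT
        subst hT
        exact card_fanoLine _ (fun i1 i2 hi => hF.1 B hB (congrArg Prod.fst hi)) j
      · obtain ⟨B', hB', hT⟩ := Multiset.mem_map.1 hT
        subst hT
        exact card_fanoLine _ (fun i1 i2 hi => hF'.1 B' hB' (congrArg Prod.snd hi)) j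
    · rintro ⟨g, h⟩ hgh
      rw [Multiset.count_bind, Multiset.map_map, Multiset.map_add, Multiset.sum_add]
      simp only [Function.comp_def]
      have hAsum : (A.map fun T => ((diffMultiset (fanoLine T j)).count (g, h))).sum
          = (𝓕.map fun B => (if g = 0 then 0 else (diffMultiset (fanoLine B j)).count g)).sum := by
        rw [hA, Multiset.map_bind, Multiset.sum_bind]
        congr 1
        refine Multiset.map_congr rfl ?_
        intro B hB
        rw [Multiset.map_map]
        simp only [Function.comp_def]
        have : ((Finset.univ.val : Multiset (Fin (Fintype.card H))).map
            fun c => (diffMultiset (fanoLine (fun i => (B i, M i c)) j)).count (g, h)).sum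
            = ∑ c : Fin (Fintype.card H), (diffMultiset (fanoLine (fun i => (B i, M i c)) j)).count (g, h) := rfl
        rw [this, col_sum M hM B (hF.1 B hB) j g h]
        by_cases hg : g = 0
        · rw [if_pos hg, hg, count_zero_diff]
        · rw [if_neg hg]
      have hBsum : (Bp.map fun T => ((diffMultiset (fanoLine T j)).count (g, h))).sum
          = (𝓕'.map fun B' =>
              (if g = 0 then (diffMultiset (fanoLine B' j)).count h else 0)).sum := by
        rw [hBp, Multiset.map_map]
        simp only [Function.comp_def]
        congr 1
        refine Multiset.map_congr rfl ?_
        intro B' hB'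
        exact zero_part B' (hF'.1 B' hB') j g h
      rw [hAsum, hBsum]
      by_cases hg : g = 0
      · have hh : h ≠ 0 := by
          intro hh0
          exact hgh (by rw [hg, hh0]; rfl)
        simp only [hg, if_true, eq_self_iff_true]
        have := (hF'.2 j).2 h hh
        rw [Multiset.count_bind, Multiset.map_map] at this
        simp only [Function.comp_def] at this
        simp only [Multiset.map_const', Multiset.sum_replicate, smul_zero, zero_add]
        exact this
      · simp only [if_neg hg]
        have := (hF.2 j).2 g hg
        rw [Multiset.count_bind, Multiset.map_map] at this
        simp only [Function.comp_def] at this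
        simp only [Multiset.map_const', Multiset.sum_replicate, smul_zero, add_zero]
        exact this
end

section
/- If there exists a (v,K,1)-pairwise balanced design and, for every k ∈ K, there exists a Fano Kaleidoscope FK(k), then there exists a Fano Kaleidoscope FK(v). -/
section FKAux

open Multiset

variable {V : Type*} [DecidableEq V]

theorem countP_bind' {α β : Type*} (p : β → Prop) [DecidablePred p]
    (s : Multiset α) (f : α → Multiset β) :
    countP p (s.bind f) = (s.map fun a => countP p (f a)).sum := by
  induction s using Multiset.induction with
  | empty => simp
  | cons a t ih => simp [Multiset.cons_bind, ih]

theorem sum_map_ite_eq_countP {α : Type*} (p : α → Prop) [DecidablePred p] (s : Multiset α) :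
    (s.map fun a => if p a then (1 : ℕ) else 0).sum = countP p s := by
  induction s using Multiset.induction with
  | empty => simp
  | cons a t ih => by_cases h : p a <;> simp [h, ih, countP_cons, add_comm]

theorem countP_map' {α β : Type*} (p : β → Prop) [DecidablePred p]
    (g : α → β) (s : Multiset α) :
    countP p (s.map g) = countP (fun a => p (g a)) s := by
  rw [Multiset.countP_map, Multiset.countP_eq_card_filter]

/-- The canonical enumeration of a finite block. -/
noncomputable def fbV (b : Finset V) : Fin b.card → V := fun j => (b.equivFin.symm j : V)

theorem fbV_inj (b : Finset V) : Function.Injective (fbV b) :=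
  fun _ _ h => b.equivFin.symm.injective (Subtype.val_injective h)

theorem fbV_mem (b : Finset V) (j : Fin b.card) : fbV b j ∈ b :=
  (b.equivFin.symm j).2

theorem fbV_surj (b : Finset V) {x : V} (hx : x ∈ b) : ∃ j, fbV b j = x :=
  ⟨b.equivFin ⟨x, hx⟩, by simp [fbV]⟩

theorem coloredFano_image {m : ℕ} (f : Fin m → V) (hf : Function.Injective f)
    {L : Fin 7 → Finset (Fin m)} (hL : IsColoredFano L) :
    IsColoredFano (fun i => (L i).image f) := by
  obtain ⟨hcard, hlines, huniq⟩ := hL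
  have hpts : linesPts (fun i => (L i).image f) = (linesPts L).image f :=
    Finset.biUnion_image.symm
  have key : ∀ (i : Fin 7) (z : Fin m), f z ∈ (L i).image f ↔ z ∈ L i := by
    intro i z
    constructor
    · intro hz
      obtain ⟨w, hw, hwz⟩ := Finset.mem_image.1 hz
      rwa [hf hwz] at hw
    · exact fun h => Finset.mem_image_of_mem f h
  refine ⟨?_, ?_, ?_⟩
  · rw [hpts, Finset.card_image_of_injective _ hf, hcard]
  · intro i
    show ((L i).image f).card = 3
    rw [Finset.card_image_of_injective _ hf]
    exact hlines i
  · intro x y hx hy hxy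
    rw [hpts] at hx hy
    obtain ⟨a, ha, rfl⟩ := Finset.mem_image.1 hx
    obtain ⟨c, hc, rfl⟩ := Finset.mem_image.1 hy
    have hac : a ≠ c := fun h => hxy (by rw [h])
    obtain ⟨i, hi, hiu⟩ := huniq a c ha hc hac
    refine ⟨i, ⟨(key i a).2 hi.1, (key i c).2 hi.2⟩, fun j hj => hiu j ⟨(key j a).1 hj.1, (key j c).1 hj.2⟩⟩

end FKAux

/-- If a (v,K,1)-PBD exists and an FK(k) exists for every k ∈ K, then an
FK(v) exists. -/
theorem exists_FK_of_PBD
    (v : ℕ) (K : Set ℕ)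
    (V : Type) [Fintype V] [DecidableEq V] (hV : Fintype.card V = v)
    (𝓑 : Multiset (Finset V)) (hPBD : IsPBD K 𝓑)
    (hFK : ∀ k ∈ K, ExistsFK k) :
    ∃ 𝓚 : Multiset (Fin 7 → Finset V), IsFanoKaleidoscope 𝓚 := by
  classical
  refine ⟨𝓑.bind (fun b => if h : b.card ∈ K then
      ((hFK _ h).choose).map (fun L i => (L i).image (fbV b)) else 0), ?_, ?_⟩
  · intro L hL
    obtain ⟨b, hb, hLb⟩ := Multiset.mem_bind.1 hL
    have hk : b.card ∈ K := hPBD.1 b hb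
    rw [dif_pos hk] at hLb
    obtain ⟨L₀, hL₀, rfl⟩ := Multiset.mem_map.1 hLb
    exact coloredFano_image (fbV b) (fbV_inj b) ((hFK _ hk).choose_spec.1 L₀ hL₀)
  · intro x y hxy i
    rw [countP_bind']
    have hmap : Multiset.map (fun b => Multiset.countP (fun L => x ∈ L i ∧ y ∈ L i)
        (if h : b.card ∈ K then
          ((hFK _ h).choose).map (fun L i => (L i).image (fbV b)) else 0)) 𝓑
        = Multiset.map (fun b => if x ∈ b ∧ y ∈ b then (1 : ℕ) else 0) 𝓑 := by
      apply Multiset.map_congr rfl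
      intro b hb
      have hk : b.card ∈ K := hPBD.1 b hb
      rw [dif_pos hk, countP_map']
      by_cases hxb : x ∈ b ∧ y ∈ b
      · obtain ⟨a, ha⟩ := fbV_surj b hxb.1
        obtain ⟨c, hc⟩ := fbV_surj b hxb.2
        have hac : a ≠ c := fun h => hxy (by rw [← ha, ← hc, h])
        rw [if_pos hxb, ← (hFK _ hk).choose_spec.2 a c hac i]
        apply Multiset.countP_congr rfl
        intro L hL
        subst ha; subst hc
        simp only [eq_iff_iff]
        constructor
        · rintro ⟨h1, h2⟩
          obtain ⟨w, hw, hwe⟩ := Finset.mem_image.1 h1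
          obtain ⟨w', hw', hwe'⟩ := Finset.mem_image.1 h2
          rw [fbV_inj b hwe] at hw
          rw [fbV_inj b hwe'] at hw'
          exact ⟨hw, hw'⟩
        · rintro ⟨h1, h2⟩
          exact ⟨Finset.mem_image_of_mem _ h1, Finset.mem_image_of_mem _ h2⟩
      · rw [if_neg hxb, Multiset.countP_eq_zero]
        intro L hL hc
        apply hxb
        obtain ⟨w, hw, hwe⟩ := Finset.mem_image.1 hc.1
        obtain ⟨w', hw', hwe'⟩ := Finset.mem_image.1 hc.2
        exact ⟨hwe ▸ fbV_mem b w, hwe' ▸ fbV_mem b w'⟩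
    rw [hmap, sum_map_ite_eq_countP]
    exact hPBD.2 x y hxy
end
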